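/- arXiv:1511.01372 — 2 statements merged into one kernel-verified Lean document; each statement's English description precedes it below -/
import Mathlib

section
/- If C is a set of cycles of a connected graph G such that the tree graph T(G,C) is connected, then C cyclically spans the cycle space of G. -/
/-!
Fix a cycle `σ` of `G` and an edge `e = uv` of it. The rest of `σ` is a path, which extends to a
spanning tree `T`; then `σ` is the fundamental cycle of `e` in `T`. Choose a spanning tree `T'`
containing `e` and a path `T = T₀, T₁, …, T_k = T'` in `T(G, C)`, and let `αᵢ ∈ C` be the unique
cycle of `Tᵢ ∪ Tᵢ₊₁ = Tᵢ + gᵢ`. The fundamental cycles of `e` in `Tᵢ` and in `Tᵢ₊₁` have an even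
symmetric difference inside the unicyclic graph `Tᵢ + gᵢ`, so they are equal or differ by `αᵢ`;
and once `e ∈ Tᵢ₊₁` the fundamental cycle of `e` in `Tᵢ` is `αᵢ` itself. Reading the path
backwards writes `σ` as a symmetric difference of the `αᵢ` whose partial sums are fundamental
cycles, hence cycles of `G`. Here an edge set is even when every vertex lies on an even number
of its edges, and the only even edge set of a forest is the empty one.
-/

open scoped symmDiff

/-- A finite edge set `s` is a cycle of `G` if it is the edge set of some cycle walk. -/
def IsCycleSet {V : Type} [DecidableEq V] (G : SimpleGraph V) (s : Finset (Sym2 V)) : Prop :=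
  ∃ (u : V) (w : G.Walk u u), w.IsCycle ∧ w.edges.toFinset = s

/-- `T` is a spanning tree of `G`. -/
def IsSpanningTree {V : Type} (G T : SimpleGraph V) : Prop :=
  T ≤ G ∧ T.IsTree

/-- `σ` is a fundamental cycle of the spanning tree `T` of `G`:
the unique cycle of `T` plus one edge of `G` not in `T`. -/
def IsFundamentalCycle {V : Type} [DecidableEq V] (G T : SimpleGraph V)
    (σ : Finset (Sym2 V)) : Prop :=
  ∃ e ∈ G.edgeSet, e ∉ T.edgeSet ∧ IsCycleSet (T ⊔ SimpleGraph.fromEdgeSet {e}) σ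

/-- `C` is an arboreal set of cycles of `G`: every spanning tree of `G`
has a fundamental cycle belonging to `C`. -/
def Arboreal {V : Type} [DecidableEq V] (G : SimpleGraph V)
    (C : Set (Finset (Sym2 V))) : Prop :=
  ∀ T : SimpleGraph V, IsSpanningTree G T → ∃ σ ∈ C, IsFundamentalCycle G T σ

/-- `C` cyclically spans the cycle space of `G`: every cycle of `G` is a symmetric
difference of a list of members of `C` all of whose partial symmetric differences
are again cycles of `G`. -/
def CyclicallySpans {V : Type} [DecidableEq V] (G : SimpleGraph V)
    (C : Set (Finset (Sym2 V))) : Prop :=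
  ∀ σ : Finset (Sym2 V), IsCycleSet G σ →
    ∃ l : List (Finset (Sym2 V)), l ≠ [] ∧ (∀ c ∈ l, c ∈ C) ∧
      σ = l.foldl (· ∆ ·) ∅ ∧
      ∀ i, 2 ≤ i → i ≤ l.length → IsCycleSet G ((l.take i).foldl (· ∆ ·) ∅)

/-- The tree graph `T(G, C)`: vertices are the spanning trees of `G`, two trees
adjacent iff their union contains exactly one cycle and this cycle lies in `C`. -/
def treeGraph {V : Type} [DecidableEq V] (G : SimpleGraph V)
    (C : Set (Finset (Sym2 V))) :
    SimpleGraph {T : SimpleGraph V // IsSpanningTree G T} :=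
  SimpleGraph.fromRel (fun R S =>
    ∃ σ ∈ C, IsCycleSet (R.1 ⊔ S.1) σ ∧ ∀ σ', IsCycleSet (R.1 ⊔ S.1) σ' → σ' = σ)

open SimpleGraph Finset

lemma Finset.even_card_symmDiff {α : Type*} [DecidableEq α] {s t : Finset α}
    (hs : Even #s) (ht : Even #t) : Even #(s ∆ t) := by
  have hcard : #(s ∆ t) + 2 * #(s ∩ t) = #s + #t := by
    rw [Finset.symmDiff_def, card_union_of_disjoint disjoint_sdiff_sdiff,
      ← card_sdiff_add_card_inter s t, ← card_sdiff_add_card_inter t s, inter_comm t s]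
    ring
  have : Even (#(s ∆ t) + 2 * #(s ∩ t)) := hcard ▸ hs.add ht
  simpa [Nat.even_add] using this

variable {V : Type}

lemma SimpleGraph.fromEdgeSet_singleton_le {G : SimpleGraph V} {e : Sym2 V}
    (he : e ∈ G.edgeSet) : fromEdgeSet {e} ≤ G :=
  (fromEdgeSet_le G).mpr (Set.sdiff_subset.trans (Set.singleton_subset_iff.mpr he))

lemma SimpleGraph.Connected.exists_isSpanningTree_mem_edgeSet {G : SimpleGraph V}
    (hG : G.Connected) {e : Sym2 V} (he : e ∈ G.edgeSet) :
    ∃ T, IsSpanningTree G T ∧ e ∈ T.edgeSet := by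
  induction e using Sym2.ind with
  | _ x y =>
  have hxy : x ≠ y := G.ne_of_adj he
  have hedge : (edge x y).IsAcyclic := by
    simpa using isAcyclic_bot.sup_edge_of_not_reachable (reachable_bot.not.mpr hxy)
  obtain ⟨T, hxyT, hTG, hT⟩ := hG.exists_isTree_le_of_le_of_isAcyclic
    (G.edge_le_iff.mpr (Or.inr he)) hedge
  exact ⟨T, ⟨hTG, hT⟩, edgeSet_mono hxyT (by simp [edgeSet_edge, hxy])⟩

variable [DecidableEq V]

def IsEvenEdgeSet (s : Finset (Sym2 V)) : Prop := ∀ v, Even #{e ∈ s | v ∈ e}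

namespace IsEvenEdgeSet

variable {s t : Finset (Sym2 V)}

protected lemma symmDiff (hs : IsEvenEdgeSet s) (ht : IsEvenEdgeSet t) :
    IsEvenEdgeSet (s ∆ t) := by
  intro v
  have : {e ∈ s ∆ t | v ∈ e} = {e ∈ s | v ∈ e} ∆ {e ∈ t | v ∈ e} := by
    ext e; simp only [mem_filter, mem_symmDiff]; tauto
  exact this ▸ even_card_symmDiff (hs v) (ht v)

lemma exists_ne_mem (hs : IsEvenEdgeSet s) {u : V} {f : Sym2 V} (hf : f ∈ s) (hu : u ∈ f) :
    ∃ f' ∈ s, u ∈ f' ∧ f' ≠ f := by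
  have hpos : 0 < #{e ∈ s | u ∈ e} := card_pos.mpr ⟨f, mem_filter.mpr ⟨hf, hu⟩⟩
  have hne : #{e ∈ s | u ∈ e} ≠ 1 := fun h => Nat.not_even_one (h ▸ hs u)
  obtain ⟨f', hf', hne'⟩ := exists_mem_ne (s := {e ∈ s | u ∈ e}) (by omega) f
  exact ⟨f', (mem_filter.mp hf').1, (mem_filter.mp hf').2, hne'⟩

end IsEvenEdgeSet

namespace IsCycleSet

variable {G H : SimpleGraph V} {s : Finset (Sym2 V)}

lemma coe_subset_edgeSet (hs : IsCycleSet G s) : (s : Set (Sym2 V)) ⊆ G.edgeSet := by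
  obtain ⟨u, w, -, rfl⟩ := hs
  intro f hf
  exact w.edges_subset_edgeSet (List.mem_toFinset.mp hf)

lemma of_coe_subset_edgeSet (hs : IsCycleSet G s) (hsH : (s : Set (Sym2 V)) ⊆ H.edgeSet) :
    IsCycleSet H s := by
  obtain ⟨u, w, hw, rfl⟩ := hs
  have hwH : ∀ f ∈ w.edges, f ∈ H.edgeSet := fun f hf => hsH (List.mem_toFinset.mpr hf)
  exact ⟨u, w.transfer H hwH, hw.transfer hwH, by rw [Walk.edges_transfer]⟩

lemma mono (hs : IsCycleSet G s) (hGH : G ≤ H) : IsCycleSet H s :=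
  hs.of_coe_subset_edgeSet (hs.coe_subset_edgeSet.trans (edgeSet_mono hGH))

lemma nonempty (hs : IsCycleSet G s) : s.Nonempty := by
  obtain ⟨u, w, hw, rfl⟩ := hs
  cases w with
  | nil => exact absurd Walk.Nil.nil hw.not_nil
  | cons h q => exact ⟨_, List.mem_toFinset.mpr (List.mem_cons_self ..)⟩

lemma isEvenEdgeSet (hs : IsCycleSet G s) : IsEvenEdgeSet s := by
  obtain ⟨u, w, hw, rfl⟩ := hs
  intro v
  have hcount := (hw.isTrail.even_countP_edges_iff v).mpr (absurd rfl)
  rw [List.countP_eq_length_filter, ← List.toFinset_card_of_nodup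
    (hw.isTrail.edges_nodup.filter _), List.toFinset_filter] at hcount
  simpa using hcount

lemma coe_subset_insert {R : SimpleGraph V} {e : Sym2 V}
    (hs : IsCycleSet (R ⊔ fromEdgeSet {e}) s) : (s : Set (Sym2 V)) ⊆ insert e R.edgeSet := by
  refine hs.coe_subset_edgeSet.trans ?_
  rw [edgeSet_sup, edgeSet_fromEdgeSet]
  rintro f (hf | hf)
  exacts [Or.inr hf, Or.inl hf.1]

end IsCycleSet

lemma SimpleGraph.IsAcyclic.not_isCycleSet {A : SimpleGraph V} (hA : A.IsAcyclic)
    {s : Finset (Sym2 V)} : ¬IsCycleSet A s := by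
  rintro ⟨u, w, hw, -⟩
  exact hA w hw

lemma SimpleGraph.Connected.exists_isCycleSet_sup {R : SimpleGraph V} (hR : R.Connected)
    {e : Sym2 V} (he : ¬e.IsDiag) (heR : e ∉ R.edgeSet) :
    ∃ s, IsCycleSet (R ⊔ fromEdgeSet {e}) s := by
  induction e using Sym2.ind with
  | _ x y =>
  have hxy : (R ⊔ fromEdgeSet {s(x, y)}).Adj x y :=
    Or.inr ((fromEdgeSet_adj _).mpr ⟨rfl, fun h => he (Sym2.mk_isDiag_iff.mpr h)⟩)
  obtain ⟨w⟩ := hR.preconnected y x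
  refine ⟨_, x, .cons hxy (w.bypass.mapLe le_sup_left), ?_, rfl⟩
  rw [Walk.cons_isCycle_iff, Walk.edges_mapLe_eq_edges]
  exact ⟨w.bypass_isPath.mapLe _, fun h => heR (w.bypass.edges_subset_edgeSet h)⟩

section Path

variable {G : SimpleGraph V} {u v : V} {p : G.Walk u v}

lemma SimpleGraph.Walk.IsPath.eq_empty_of_isEvenEdgeSet (hp : p.IsPath) {s : Finset (Sym2 V)}
    (hs : IsEvenEdgeSet s) (hsp : ∀ f ∈ s, f ∈ p.edges) : s = ∅ := by
  induction p with
  | nil => exact eq_empty_of_forall_notMem fun f hf => by simpa using hsp f hf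
  | @cons u z w h q ih =>
    rw [Walk.cons_isPath_iff] at hp
    by_cases huz : s(u, z) ∈ s
    · have hleaf : {e ∈ s | u ∈ e} = {s(u, z)} := by
        refine eq_singleton_iff_unique_mem.mpr ⟨mem_filter.mpr ⟨huz, Sym2.mem_mk_left u z⟩, ?_⟩
        intro f hf
        rw [mem_filter] at hf
        rcases List.mem_cons.mp (hsp f hf.1) with hfe | hfq
        · exact hfe
        · exact absurd (Walk.mem_support_of_mem_edges hfq hf.2) hp.2
      have hodd := hs u
      rw [hleaf, card_singleton] at hodd
      exact absurd hodd (by decide)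
    · refine ih hp.1 fun f hf => (List.mem_cons.mp (hsp f hf)).resolve_left ?_
      rintro rfl
      exact huz hf

lemma SimpleGraph.Walk.IsPath.isAcyclic_fromEdgeSet (hp : p.IsPath) :
    (fromEdgeSet p.edgeSet).IsAcyclic := fun a c hc => by
  have hcycle : IsCycleSet (fromEdgeSet p.edgeSet) c.edges.toFinset := ⟨a, c, hc, rfl⟩
  refine hcycle.nonempty.ne_empty (hp.eq_empty_of_isEvenEdgeSet hcycle.isEvenEdgeSet ?_)
  intro f hf
  exact (edgeSet_fromEdgeSet _ ▸ hcycle.coe_subset_edgeSet hf).1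

end Path

lemma IsCycleSet.exists_isFundamentalCycle {G : SimpleGraph V} (hG : G.Connected)
    {σ : Finset (Sym2 V)} (hσ : IsCycleSet G σ) :
    ∃ T, IsSpanningTree G T ∧ IsFundamentalCycle G T σ := by
  obtain ⟨u, w, hw, rfl⟩ := hσ
  cases w with
  | nil => exact absurd Walk.Nil.nil hw.not_nil
  | @cons _ v _ huv q =>
  have hq := ((Walk.cons_isCycle_iff q huv).mp hw).1
  have hqG : fromEdgeSet q.edgeSet ≤ G :=
    (fromEdgeSet_le G).mpr (Set.sdiff_subset.trans fun f hf => q.edges_subset_edgeSet hf)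
  obtain ⟨T, hqT, hTG, hT⟩ := hG.exists_isTree_le_of_le_of_isAcyclic hqG hq.isAcyclic_fromEdgeSet
  have hσT : IsCycleSet (T ⊔ fromEdgeSet {s(u, v)}) (Walk.cons huv q).edges.toFinset := by
    refine IsCycleSet.of_coe_subset_edgeSet ⟨u, _, hw, rfl⟩ fun f hf => ?_
    rw [edgeSet_sup]
    rcases List.mem_cons.mp (List.mem_toFinset.mp hf) with rfl | hfq
    · exact Or.inr ((fromEdgeSet_adj _).mpr ⟨rfl, huv.ne⟩)
    · refine Or.inl (edgeSet_mono hqT ?_)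
      rw [edgeSet_fromEdgeSet]
      exact ⟨hfq, G.not_isDiag_of_mem_edgeSet (q.edges_subset_edgeSet hfq)⟩
  refine ⟨T, ⟨hTG, hT⟩, s(u, v), huv, fun huvT => ?_, hσT⟩
  exact hT.isAcyclic.not_isCycleSet (hσT.mono (sup_le le_rfl (fromEdgeSet_singleton_le huvT)))

section Forest

variable [Fintype V] {R : SimpleGraph V} {e : Sym2 V}

lemma SimpleGraph.IsAcyclic.eq_empty_of_isEvenEdgeSet (hR : R.IsAcyclic) {s : Finset (Sym2 V)}
    (hs : IsEvenEdgeSet s) (hsR : (s : Set (Sym2 V)) ⊆ R.edgeSet) : s = ∅ := by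
  by_contra hne
  set H := fromEdgeSet (s : Set (Sym2 V))
  have hH : H.IsAcyclic := IsAcyclic.anti ((fromEdgeSet_le R).mpr (Set.sdiff_subset.trans hsR)) hR
  have hadj : ∀ {a b : V}, H.Adj a b ↔ s(a, b) ∈ s := fun {a b} =>
    ⟨fun h => ((fromEdgeSet_adj _).mp h).1,
      fun h => (fromEdgeSet_adj _).mpr ⟨h, R.ne_of_adj (hsR h)⟩⟩
  -- Every path of `H` prolongs at its start: evenness gives its first vertex a second edge in
  -- `s`, and acyclicity keeps the new neighbour off the path. This contradicts finiteness.
  have hlong : ∀ n, ∃ (a b : V) (p : H.Walk a b), p.IsPath ∧ p.length = n + 1 := by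
    intro n
    induction n with
    | zero =>
      obtain ⟨f, hf⟩ := nonempty_iff_ne_empty.mpr hne
      induction f using Sym2.ind with
      | _ a b =>
      have hab := hadj.mpr hf
      exact ⟨a, b, .cons hab .nil, by simp [hab.ne], rfl⟩
    | succ n ih =>
      obtain ⟨a, b, p, hp, hlen⟩ := ih
      cases p with
      | nil => simp at hlen
      | @cons _ z _ h q =>
        obtain ⟨f, hfs, haf, hfz⟩ := hs.exists_ne_mem (hadj.mp h) (Sym2.mem_mk_left a z)
        obtain ⟨c, rfl⟩ := Sym2.mem_iff_exists.mp haf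
        have hac : H.Adj a c := hadj.mpr hfs
        have hc : c ∉ (Walk.cons h q).support := fun hc => hfz (by
          rw [hH.eq_snd_of_adj_start hp hac hc, Walk.snd_cons])
        exact ⟨c, b, .cons hac.symm (.cons h q), hp.cons hc, by simp [hlen]⟩
  obtain ⟨a, b, p, hp, hlen⟩ := hlong (Fintype.card V)
  have := hp.length_lt
  omega

lemma SimpleGraph.IsAcyclic.mem_of_coe_subset_insert (hR : R.IsAcyclic)
    {s : Finset (Sym2 V)} (hs : IsEvenEdgeSet s) (hsne : s.Nonempty)
    (hsR : (s : Set (Sym2 V)) ⊆ insert e R.edgeSet) : e ∈ s := by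
  by_contra he
  refine hsne.ne_empty (hR.eq_empty_of_isEvenEdgeSet hs fun f hf => ?_)
  refine (hsR hf).resolve_left ?_
  rintro rfl
  exact he hf

lemma SimpleGraph.IsAcyclic.mem_of_isCycleSet_sup (hR : R.IsAcyclic) {s : Finset (Sym2 V)}
    (hs : IsCycleSet (R ⊔ fromEdgeSet {e}) s) : e ∈ s :=
  hR.mem_of_coe_subset_insert hs.isEvenEdgeSet hs.nonempty hs.coe_subset_insert

lemma SimpleGraph.IsAcyclic.eq_of_coe_subset_insert (hR : R.IsAcyclic)
    {s t : Finset (Sym2 V)} (hs : IsEvenEdgeSet s) (ht : IsEvenEdgeSet t)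
    (hsne : s.Nonempty) (htne : t.Nonempty) (hsR : (s : Set (Sym2 V)) ⊆ insert e R.edgeSet)
    (htR : (t : Set (Sym2 V)) ⊆ insert e R.edgeSet) : s = t := by
  have hes := hR.mem_of_coe_subset_insert hs hsne hsR
  have het := hR.mem_of_coe_subset_insert ht htne htR
  rw [← symmDiff_eq_empty]
  refine hR.eq_empty_of_isEvenEdgeSet (hs.symmDiff ht) fun f hf => ?_
  rcases mem_symmDiff.mp hf with ⟨hfs, hft⟩ | ⟨hft, hfs⟩
  · exact (hsR hfs).resolve_left (by rintro rfl; exact hft het)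
  · exact (htR hft).resolve_left (by rintro rfl; exact hfs hes)

/-- Every edge `f` of `S` outside `R` closes a cycle with `R`, which must be the unique cycle of
`R ⊔ S`, and so must the cycle closed by `g`; as `f` lies on its own cycle, `f = g`. -/
lemma SimpleGraph.IsTree.exists_edgeSet_subset_insert {S : SimpleGraph V} (hR : R.IsTree)
    (hS : S.IsTree) (hRS : R ≠ S) {α : Finset (Sym2 V)}
    (huniq : ∀ σ, IsCycleSet (R ⊔ S) σ → σ = α) : ∃ g, S.edgeSet ⊆ insert g R.edgeSet := by
  have hSR : ¬S.edgeSet ⊆ R.edgeSet := fun h =>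
    have hSR : S ≤ R := edgeSet_subset_edgeSet.mp h
    hRS (le_antisymm ((isTree_iff_maximal_isAcyclic.mp hS).2.le_of_ge hR.isAcyclic hSR) hSR)
  obtain ⟨g, hgS, hgR⟩ := Set.not_subset.mp hSR
  have hcycle : ∀ f ∈ S.edgeSet, f ∉ R.edgeSet →
      ∃ c, IsCycleSet (R ⊔ fromEdgeSet {f}) c ∧ c = α := fun f hfS hfR => by
    obtain ⟨c, hc⟩ := hR.connected.exists_isCycleSet_sup (S.not_isDiag_of_mem_edgeSet hfS) hfR
    exact ⟨c, hc, huniq c (hc.mono (sup_le_sup_left (fromEdgeSet_singleton_le hfS) R))⟩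
  refine ⟨g, fun f hfS => ?_⟩
  by_contra hf
  rw [Set.mem_insert_iff, not_or] at hf
  obtain ⟨cf, hcf, hcfα⟩ := hcycle f hfS hf.2
  obtain ⟨cg, hcg, hcgα⟩ := hcycle g hgS hgR
  have hfcg : f ∈ cg := hcgα ▸ hcfα ▸ hR.isAcyclic.mem_of_isCycleSet_sup hcf
  exact (hcg.coe_subset_insert hfcg).elim hf.1 hf.2

lemma IsCycleSet.eq_or_eq_symmDiff {R' : SimpleGraph V} (hR : R.IsAcyclic)
    (hR' : R'.IsAcyclic) {g : Sym2 V} (hR'R : R'.edgeSet ⊆ insert g R.edgeSet)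
    {α : Finset (Sym2 V)} (hα : IsEvenEdgeSet α) (hαne : α.Nonempty)
    (hαR : (α : Set (Sym2 V)) ⊆ insert g R.edgeSet) {s s' : Finset (Sym2 V)}
    (hs : IsCycleSet (R ⊔ fromEdgeSet {e}) s) (hs' : IsCycleSet (R' ⊔ fromEdgeSet {e}) s') :
    s = s' ∨ s = s' ∆ α := by
  by_cases hss' : s = s'
  · exact Or.inl hss'
  right
  have hes := hR.mem_of_isCycleSet_sup hs
  have hes' := hR'.mem_of_isCycleSet_sup hs'
  have hdiff : (↑(s ∆ s') : Set (Sym2 V)) ⊆ insert g R.edgeSet := by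
    intro f hf
    rcases mem_symmDiff.mp hf with ⟨hfs, hfs'⟩ | ⟨hfs', hfs⟩
    · exact Or.inr ((hs.coe_subset_insert hfs).resolve_left (by rintro rfl; exact hfs' hes'))
    · exact hR'R ((hs'.coe_subset_insert hfs').resolve_left (by rintro rfl; exact hfs hes))
  have hsα : s ∆ s' = α := hR.eq_of_coe_subset_insert
    (hs.isEvenEdgeSet.symmDiff hs'.isEvenEdgeSet) hα (symmDiff_nonempty.mpr hss') hαne hdiff hαR
  rw [← hsα, symmDiff_comm s s', symmDiff_symmDiff_cancel_left]

end Forest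

section CyclicCombination

variable {G : SimpleGraph V} {C : Set (Finset (Sym2 V))} {σ α : Finset (Sym2 V)}

def IsCyclicCombination (G : SimpleGraph V) (C : Set (Finset (Sym2 V)))
    (σ : Finset (Sym2 V)) : Prop :=
  ∃ l : List (Finset (Sym2 V)), l ≠ [] ∧ (∀ c ∈ l, c ∈ C) ∧ σ = l.foldl (· ∆ ·) ∅ ∧
    ∀ i, 2 ≤ i → i ≤ l.length → IsCycleSet G ((l.take i).foldl (· ∆ ·) ∅)

lemma isCyclicCombination_of_mem (hα : α ∈ C) : IsCyclicCombination G C α :=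
  ⟨[α], List.cons_ne_nil _ _, by simpa using hα, by simp [← bot_eq_empty],
    fun i h2 h1 => by simp at h1; omega⟩

lemma IsCyclicCombination.symmDiff (hσ : IsCyclicCombination G C σ) (hα : α ∈ C)
    (hσα : IsCycleSet G (σ ∆ α)) : IsCyclicCombination G C (σ ∆ α) := by
  obtain ⟨l, hl, hlC, rfl, hpartial⟩ := hσ
  refine ⟨l ++ [α], by simp, ?_, by simp, fun i h2 hi => ?_⟩
  · simpa [or_imp, forall_and] using And.intro hlC hα
  · rw [List.length_append, List.length_singleton] at hi
    rcases Nat.lt_or_ge l.length i with hil | hil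
    · rw [List.take_of_length_le (by simp; omega)]
      simpa using hσα
    · rw [List.take_append_of_le_length hil]
      exact hpartial i h2 hil

lemma treeGraph_adj {R S : {T : SimpleGraph V // IsSpanningTree G T}} :
    (treeGraph G C).Adj R S ↔ R ≠ S ∧
      ∃ α ∈ C, IsCycleSet (R.1 ⊔ S.1) α ∧ ∀ σ, IsCycleSet (R.1 ⊔ S.1) σ → σ = α := by
  rw [treeGraph, fromRel_adj, sup_comm S.1, or_self]

lemma IsCycleSet.isCyclicCombination_of_walk [Fintype V]
    {R S : {T : SimpleGraph V // IsSpanningTree G T}} (p : (treeGraph G C).Walk R S)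
    {e : Sym2 V} (heG : e ∈ G.edgeSet) (heS : e ∈ S.1.edgeSet) {s : Finset (Sym2 V)}
    (hs : IsCycleSet (R.1 ⊔ fromEdgeSet {e}) s) : IsCyclicCombination G C s := by
  induction p generalizing s with
  | @nil T =>
    exact (T.2.2.isAcyclic.not_isCycleSet
      (hs.mono (sup_le le_rfl (fromEdgeSet_singleton_le heS)))).elim
  | @cons R R' S hadj p ih =>
    obtain ⟨hRR', α, hαC, hα, huniq⟩ := treeGraph_adj.mp hadj
    by_cases heR' : e ∈ R'.1.edgeSet
    · rw [huniq s (hs.mono (sup_le_sup_left (fromEdgeSet_singleton_le heR') _))]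
      exact isCyclicCombination_of_mem hαC
    obtain ⟨s', hs'⟩ :=
      R'.2.2.connected.exists_isCycleSet_sup (G.not_isDiag_of_mem_edgeSet heG) heR'
    obtain ⟨g, hR'R⟩ :=
      R.2.2.exists_edgeSet_subset_insert R'.2.2 (Subtype.coe_ne_coe.mpr hRR') huniq
    have hαR : (α : Set (Sym2 V)) ⊆ insert g R.1.edgeSet := by
      refine hα.coe_subset_edgeSet.trans ?_
      rw [edgeSet_sup]
      exact Set.union_subset (Set.subset_insert _ _) hR'R
    rcases hs.eq_or_eq_symmDiff R.2.2.isAcyclic R'.2.2.isAcyclic hR'R hα.isEvenEdgeSet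
      hα.nonempty hαR hs' with rfl | rfl
    · exact ih heS hs'
    · exact (ih heS hs').symmDiff hαC (hs.mono (sup_le R.2.1 (fromEdgeSet_singleton_le heG)))

end CyclicCombination

theorem statement0_general {V : Type} [Fintype V] [DecidableEq V] (G : SimpleGraph V)
    (hG : G.Connected) (C : Set (Finset (Sym2 V)))
    (hconn : (treeGraph G C).Connected) :
    CyclicallySpans G C := by
  intro σ hσ
  obtain ⟨T, hT, e, heG, -, hσT⟩ := hσ.exists_isFundamentalCycle hG
  obtain ⟨T₁, hT₁, heT₁⟩ := hG.exists_isSpanningTree_mem_edgeSet heG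
  obtain ⟨p⟩ := hconn.preconnected ⟨T, hT⟩ ⟨T₁, hT₁⟩
  exact hσT.isCyclicCombination_of_walk p heG heT₁

/-- **Li, Neumann-Lara, Rivera-Campo.** If `C` is a set of cycles of a connected
graph `G` such that the tree graph `T(G, C)` is connected, then `C` cyclically
spans the cycle space of `G`. -/
theorem statement0 {V : Type} [Fintype V] [DecidableEq V] (G : SimpleGraph V)
    (hG : G.Connected) (C : Set (Finset (Sym2 V)))
    (hC : ∀ σ ∈ C, IsCycleSet G σ)
    (hconn : (treeGraph G C).Connected) :
    CyclicallySpans G C :=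
  statement0_general G hG C hconn
end

section
/- Let G_t and G_{t+1} be as in the iterated octahedron construction, and suppose C_t is arboreal with respect to G_t. If P is a spanning tree of G_{t+1} none of whose fundamental cycles lies in C_{t+1}, then the edges of P not belonging to G_t form a path of length 3 through the three new vertices, and deleting the three new vertices from P yields a spanning tree of G_t none of whose fundamental cycles lies in C_t; hence C_{t+1} is arboreal with respect to G_{t+1}. -/
open scoped symmDiff

/-!
Write `x, y, z` for the new vertices `inr 0, inr 1, inr 2`. Let `P` be a spanning tree of
`Gt1` with no fundamental cycle in `Ct1`. Two edges of `P` on a face of `Ct1` would close it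
into a fundamental cycle, so each of the faces `x y c`, `y z a`, `x z b` carries at most one
edge of `P`. Every edge at a new vertex lies on one of these three faces, so at most three of
the `|V| + 2` edges of `P` leave `V`; the remaining edges form a forest on `V` with `|V| - 1`
edges, i.e. a spanning tree of `Gt`. By arboreality of `Ct` it has a fundamental cycle in
`Ct`, whose image is a fundamental cycle of `P` in `Ct1`. Hence no such `P` exists.
-/

open SimpleGraph

def triangle {V : Type} [DecidableEq V] (u v w : V) : Finset (Sym2 V) :=
  {s(u, v), s(v, w), s(w, u)}

section Cycles

variable {V W : Type} [DecidableEq V] [DecidableEq W]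

lemma isCycleSet_triangle {G : SimpleGraph V} {u v w : V}
    (huv : G.Adj u v) (hvw : G.Adj v w) (hwu : G.Adj w u) :
    IsCycleSet G (triangle u v w) := by
  refine ⟨u, .cons huv (.cons hvw (.cons hwu .nil)), ?_, by simp [triangle]⟩
  have := huv.ne; have := hvw.ne; have := hwu.ne
  rw [Walk.cons_isCycle_iff]
  simp [Walk.isPath_def]
  tauto

lemma IsCycleSet.map {G : SimpleGraph V} {G' : SimpleGraph W} (f : G →g G')
    (hf : Function.Injective f) {s : Finset (Sym2 V)} (hs : IsCycleSet G s) :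
    IsCycleSet G' (s.image (Sym2.map f)) := by
  obtain ⟨u, w, hw, rfl⟩ := hs
  exact ⟨f u, w.map f, hw.map hf, by ext; simp [Walk.edges_map]⟩

lemma IsFundamentalCycle.of_comap {G : SimpleGraph V} {G' T : SimpleGraph W} (f : V ↪ W)
    (hG : G ≤ G'.comap f) {σ : Finset (Sym2 V)} (hσ : IsFundamentalCycle G (T.comap f) σ) :
    IsFundamentalCycle G' T (σ.image (Sym2.map f)) := by
  obtain ⟨e, he, heT, hcyc⟩ := hσ
  induction e using Sym2.ind with
  | _ u v =>
  refine ⟨s(f u, f v), hG he, heT, hcyc.map ⟨f, fun {x y} hxy => ?_⟩ f.injective⟩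
  rcases hxy with hxy | ⟨hxy, hne⟩
  · exact Or.inl hxy
  · refine Or.inr ⟨?_, f.injective.ne hne⟩
    rw [Sym2.toRel_prop, Set.mem_singleton_iff] at hxy ⊢
    rw [← Sym2.map_mk, hxy, Sym2.map_mk]

end Cycles

section Faces

variable {V : Type} [DecidableEq V] {G T : SimpleGraph V} {u v w : V}

lemma triangle_rotate (u v w : V) : triangle v w u = triangle u v w := by
  ext e
  simp only [triangle, Finset.mem_insert, Finset.mem_singleton]
  tauto

lemma isFundamentalCycle_triangle (hT : T.IsAcyclic) (huv : T.Adj u v) (hvw : T.Adj v w)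
    (hwu : G.Adj w u) : IsFundamentalCycle G T (triangle u v w) := by
  have hwu' : ¬ T.Adj w u := fun h => by
    obtain ⟨_, c, hc, -⟩ := isCycleSet_triangle huv hvw h
    exact hT c hc
  exact ⟨s(w, u), hwu, hwu', isCycleSet_triangle (.inl huv) (.inl hvw) (.inr ⟨rfl, hwu.ne⟩)⟩

lemma ncard_triangle_inter_edgeSet_le_one (hT : T.IsAcyclic)
    (hno : ¬ IsFundamentalCycle G T (triangle u v w))
    (huv : G.Adj u v) (hvw : G.Adj v w) (hwu : G.Adj w u) :
    ((triangle u v w : Set (Sym2 V)) ∩ T.edgeSet).ncard ≤ 1 := by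
  have h₁ : ¬ (T.Adj u v ∧ T.Adj v w) := fun h =>
    hno (isFundamentalCycle_triangle hT h.1 h.2 hwu)
  have h₂ : ¬ (T.Adj v w ∧ T.Adj w u) := fun h => hno <| by
    simpa only [triangle_rotate] using isFundamentalCycle_triangle hT h.1 h.2 huv
  have h₃ : ¬ (T.Adj w u ∧ T.Adj u v) := fun h => hno <| by
    simpa only [triangle_rotate] using isFundamentalCycle_triangle hT h.1 h.2 hvw
  rw [Set.ncard_le_one]
  rintro e ⟨he, heT⟩ e' ⟨he', heT'⟩
  simp only [triangle, Finset.coe_insert, Finset.coe_singleton, Set.mem_insert_iff,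
    Set.mem_singleton_iff] at he he'
  rcases he with rfl | rfl | rfl <;> rcases he' with rfl | rfl | rfl <;>
    simp only [mem_edgeSet] at heT heT' <;> first | rfl | tauto

end Faces

namespace SimpleGraph

lemma IsAcyclic.isTree_of_card_le_ncard_edgeSet_add_one {V : Type} [Finite V] [Nonempty V]
    {G : SimpleGraph V} (hG : G.IsAcyclic) (hcard : Nat.card V ≤ G.edgeSet.ncard + 1) :
    G.IsTree := by
  obtain ⟨F, hGF, -, hF, hreach⟩ :=
    (⊤ : SimpleGraph V).exists_isAcyclic_reachable_eq_le_of_le_of_isAcyclic le_top hG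
  have hFtree : F.IsTree :=
    ⟨⟨fun x y => hreach ▸ connected_top.preconnected x y⟩, hF⟩
  have hFcard : F.edgeSet.ncard + 1 = Nat.card V := by
    simpa using (isTree_iff_connected_and_card.mp hFtree).2
  have : G.edgeSet = F.edgeSet :=
    Set.eq_of_subset_of_ncard_le (edgeSet_mono hGF) (by omega)
  rwa [edgeSet_inj.mp this]

lemma IsTree.isTree_comap_inl {α β : Type} [Finite α] [Finite β] [Nonempty α]
    {T : SimpleGraph (α ⊕ β)} (hT : T.IsTree)
    (hnew : (T.edgeSet \ Set.range (Sym2.map Sum.inl)).ncard ≤ Nat.card β) :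
    (T.comap Sum.inl).IsTree := by
  refine (hT.isAcyclic.of_comap Function.Embedding.inl).isTree_of_card_le_ncard_edgeSet_add_one ?_
  change Nat.card α ≤ (T.comap Sum.inl).edgeSet.ncard + 1
  have hsplit : T.edgeSet ⊆ Sym2.map Sum.inl '' (T.comap Sum.inl).edgeSet ∪
      (T.edgeSet \ Set.range (Sym2.map Sum.inl)) := by
    intro e he
    by_cases hr : e ∈ Set.range (Sym2.map Sum.inl)
    · obtain ⟨e', rfl⟩ := hr
      induction e' using Sym2.ind
      exact Or.inl ⟨_, he, rfl⟩
    · exact Or.inr ⟨he, hr⟩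
  have hT_card : T.edgeSet.ncard + 1 = Nat.card α + Nat.card β := by
    simpa using (isTree_iff_connected_and_card.mp hT).2
  have hle := (Set.ncard_le_ncard hsplit).trans (Set.ncard_union_le _ _)
  have himage := Set.ncard_image_le (f := Sym2.map (Sum.inl : α → α ⊕ β))
    (s := (T.comap Sum.inl).edgeSet)
  omega

end SimpleGraph

section OctahedralLayer

open Sum

variable {V : Type} [DecidableEq V] {H T : SimpleGraph (V ⊕ Fin 3)} {a b c : V}

lemma edgeSet_diff_range_inl_subset
    (hX : ∀ v, H.Adj (inr 0) (inl v) → v = b ∨ v = c)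
    (hY : ∀ v, H.Adj (inr 1) (inl v) → v = a ∨ v = c)
    (hZ : ∀ v, H.Adj (inr 2) (inl v) → v = a ∨ v = b) :
    H.edgeSet \ Set.range (Sym2.map inl) ⊆
      ↑(triangle (inr 0 : V ⊕ Fin 3) (inr 1) (inl c)) ∪
        ↑(triangle (inr 1 : V ⊕ Fin 3) (inr 2) (inl a)) ∪
        ↑(triangle (inr 0 : V ⊕ Fin 3) (inr 2) (inl b)) := by
  rintro e ⟨he, hnot⟩
  induction e using Sym2.ind with
  | _ p q =>
  rw [mem_edgeSet] at he
  rcases p with u | i <;> rcases q with v | j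
  · exact absurd ⟨s(u, v), rfl⟩ hnot
  · fin_cases j <;> simp [triangle]
    exacts [hX u he.symm, hY u he.symm, (hZ u he.symm).symm]
  · fin_cases i <;> simp [triangle]
    exacts [hX v he, hY v he, (hZ v he).symm]
  · fin_cases i <;> fin_cases j <;> simp [triangle] at he ⊢

lemma ncard_edgeSet_diff_range_inl_le_three (hTH : T ≤ H)
    (hX : ∀ v, H.Adj (inr 0) (inl v) → v = b ∨ v = c)
    (hY : ∀ v, H.Adj (inr 1) (inl v) → v = a ∨ v = c)
    (hZ : ∀ v, H.Adj (inr 2) (inl v) → v = a ∨ v = b)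
    (hc : (↑(triangle (inr 0 : V ⊕ Fin 3) (inr 1) (inl c)) ∩ T.edgeSet).ncard ≤ 1)
    (ha : (↑(triangle (inr 1 : V ⊕ Fin 3) (inr 2) (inl a)) ∩ T.edgeSet).ncard ≤ 1)
    (hb : (↑(triangle (inr 0 : V ⊕ Fin 3) (inr 2) (inl b)) ∩ T.edgeSet).ncard ≤ 1) :
    (T.edgeSet \ Set.range (Sym2.map inl)).ncard ≤ 3 := by
  have hsub : T.edgeSet \ Set.range (Sym2.map inl) ⊆
      ↑(triangle (inr 0 : V ⊕ Fin 3) (inr 1) (inl c)) ∩ T.edgeSet ∪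
        ↑(triangle (inr 1 : V ⊕ Fin 3) (inr 2) (inl a)) ∩ T.edgeSet ∪
        ↑(triangle (inr 0 : V ⊕ Fin 3) (inr 2) (inl b)) ∩ T.edgeSet := by
    rw [← Set.union_inter_distrib_right, ← Set.union_inter_distrib_right]
    exact fun e he =>
      ⟨edgeSet_diff_range_inl_subset hX hY hZ ⟨edgeSet_mono hTH he.1, he.2⟩, he.1⟩
  calc (T.edgeSet \ Set.range (Sym2.map inl)).ncard
      ≤ _ := Set.ncard_le_ncard hsub
    _ ≤ _ := (Set.ncard_union_le _ _).trans (Nat.add_le_add_right (Set.ncard_union_le _ _) _)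
    _ ≤ 3 := by omega

end OctahedralLayer

theorem statement9_general {V : Type} [Fintype V] [DecidableEq V]
    (Gt : SimpleGraph V) (Gt1 : SimpleGraph (V ⊕ Fin 3))
    (a b c : V)
    (hadjV : ∀ u v : V, Gt1.Adj (Sum.inl u) (Sum.inl v) ↔ Gt.Adj u v)
    (hadjNew : ∀ i j : Fin 3, Gt1.Adj (Sum.inr i) (Sum.inr j) ↔ i ≠ j)
    (hadjX : ∀ v : V, Gt1.Adj (Sum.inr 0) (Sum.inl v) ↔ (v = b ∨ v = c))
    (hadjY : ∀ v : V, Gt1.Adj (Sum.inr 1) (Sum.inl v) ↔ (v = a ∨ v = c))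
    (hadjZ : ∀ v : V, Gt1.Adj (Sum.inr 2) (Sum.inl v) ↔ (v = a ∨ v = b))
    (Ct : Set (Finset (Sym2 V)))
    (Ct1 : Set (Finset (Sym2 (V ⊕ Fin 3))))
    -- `Ct1` is `Ct` together with the six new triangular faces of the layer:
    (hCt1 : Ct1 = ((fun s => s.image (Sym2.map Sum.inl)) '' Ct) ∪
      ({ {s(Sum.inr 0, Sum.inl b), s(Sum.inl b, Sum.inl c), s(Sum.inl c, Sum.inr 0)},
         {s(Sum.inr 1, Sum.inl a), s(Sum.inl a, Sum.inl c), s(Sum.inl c, Sum.inr 1)},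
         {s(Sum.inr 2, Sum.inl a), s(Sum.inl a, Sum.inl b), s(Sum.inl b, Sum.inr 2)},
         {s(Sum.inr 0, Sum.inr 1), s(Sum.inr 1, Sum.inl c), s(Sum.inl c, Sum.inr 0)},
         {s(Sum.inr 1, Sum.inr 2), s(Sum.inr 2, Sum.inl a), s(Sum.inl a, Sum.inr 1)},
         {s(Sum.inr 0, Sum.inr 2), s(Sum.inr 2, Sum.inl b), s(Sum.inl b, Sum.inr 0)} } :
        Set (Finset (Sym2 (V ⊕ Fin 3)))))
    (harb : Arboreal Gt Ct) :
    (∀ P : SimpleGraph (V ⊕ Fin 3), IsSpanningTree Gt1 P →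
      (¬ ∃ s ∈ Ct1, IsFundamentalCycle Gt1 P s) →
      -- the edges of `P` not belonging to `Gt` form a path of length `3`
      -- passing through the three new vertices:
      (∃ (u w : V ⊕ Fin 3) (p : Gt1.Walk u w), p.IsPath ∧ p.length = 3 ∧
        {e | e ∈ p.edges} =
          P.edgeSet \ ((Sym2.map Sum.inl) '' Gt.edgeSet) ∧
        ∀ i : Fin 3, Sum.inr i ∈ p.support) ∧
      -- deleting the three new vertices yields a spanning tree of `Gt`
      -- none of whose fundamental cycles lies in `Ct`:
      IsSpanningTree Gt (P.comap Sum.inl) ∧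
      ¬ ∃ s ∈ Ct, IsFundamentalCycle Gt (P.comap Sum.inl) s) ∧
    Arboreal Gt1 Ct1 := by
  have hGt : Gt1.comap Sum.inl = Gt := by ext u v; exact hadjV u v
  have hArboreal : Arboreal Gt1 Ct1 := by
    intro P hP
    by_contra! hno
    have hface : ∀ {u v w}, Gt1.Adj u v → Gt1.Adj v w → Gt1.Adj w u →
        triangle u v w ∈ Ct1 → (↑(triangle u v w) ∩ P.edgeSet).ncard ≤ 1 :=
      fun huv hvw hwu hmem =>
        ncard_triangle_inter_edgeSet_le_one hP.2.isAcyclic (hno _ hmem) huv hvw hwu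
    have hnew := ncard_edgeSet_diff_range_inl_le_three hP.1
      (fun v => (hadjX v).1) (fun v => (hadjY v).1) (fun v => (hadjZ v).1)
      (hface ((hadjNew 0 1).2 (by decide)) ((hadjY c).2 (.inr rfl)) ((hadjX c).2 (.inr rfl)).symm
        (by rw [hCt1]; simp [triangle]))
      (hface ((hadjNew 1 2).2 (by decide)) ((hadjZ a).2 (.inl rfl)) ((hadjY a).2 (.inl rfl)).symm
        (by rw [hCt1]; simp [triangle]))
      (hface ((hadjNew 0 2).2 (by decide)) ((hadjZ b).2 (.inr rfl)) ((hadjX b).2 (.inl rfl)).symm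
        (by rw [hCt1]; simp [triangle]))
    have : Nonempty V := ⟨a⟩
    have hP' : IsSpanningTree Gt (P.comap Sum.inl) :=
      ⟨hGt ▸ fun _ _ h => hP.1 h, hP.2.isTree_comap_inl (by simpa using hnew)⟩
    obtain ⟨σ, hσ, hfund⟩ := harb _ hP'
    exact hno _ (by rw [hCt1]; exact Or.inl ⟨σ, hσ, rfl⟩)
      (hfund.of_comap Function.Embedding.inl hGt.ge)
  exact ⟨fun P hP hno => absurd (hArboreal P hP) hno, hArboreal⟩

/-- One step of the iterated octahedron construction.  Here `Gt` is the previous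
graph, drawn in the plane with outer triangle `a b c`, and `Gt1` is obtained from
`Gt` by adding a new outer octahedral layer on three new vertices
`x = inr 0`, `y = inr 1`, `z = inr 2` (forming the new outer triangle), with
`x` adjacent to `b, c`, `y` adjacent to `a, c` and `z` adjacent to `a, b`.
`Ct1` consists of the (images of the) cycles of `Ct` together with the six new
triangular faces of the layer.  If `Ct` is arboreal with respect to `Gt`, then any
spanning tree `P` of `Gt1` none of whose fundamental cycles lies in `Ct1` would
have its non-`Gt` edges forming a path of length `3` through the three new
vertices, and would restrict to a spanning tree of `Gt` with no fundamental cycle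
in `Ct`; hence `Ct1` is arboreal with respect to `Gt1`. -/
theorem statement9 {V : Type} [Fintype V] [DecidableEq V]
    (Gt : SimpleGraph V) (Gt1 : SimpleGraph (V ⊕ Fin 3))
    (a b c : V) (hab : a ≠ b) (hac : a ≠ c) (hbc : b ≠ c)
    (houter : Gt.Adj a b ∧ Gt.Adj b c ∧ Gt.Adj a c)
    (hadjV : ∀ u v : V, Gt1.Adj (Sum.inl u) (Sum.inl v) ↔ Gt.Adj u v)
    (hadjNew : ∀ i j : Fin 3, Gt1.Adj (Sum.inr i) (Sum.inr j) ↔ i ≠ j)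
    (hadjX : ∀ v : V, Gt1.Adj (Sum.inr 0) (Sum.inl v) ↔ (v = b ∨ v = c))
    (hadjY : ∀ v : V, Gt1.Adj (Sum.inr 1) (Sum.inl v) ↔ (v = a ∨ v = c))
    (hadjZ : ∀ v : V, Gt1.Adj (Sum.inr 2) (Sum.inl v) ↔ (v = a ∨ v = b))
    (Ct : Set (Finset (Sym2 V))) (hCt : ∀ s ∈ Ct, IsCycleSet Gt s)
    (Ct1 : Set (Finset (Sym2 (V ⊕ Fin 3))))
    -- `Ct1` is `Ct` together with the six new triangular faces of the layer:
    (hCt1 : Ct1 = ((fun s => s.image (Sym2.map Sum.inl)) '' Ct) ∪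
      ({ {s(Sum.inr 0, Sum.inl b), s(Sum.inl b, Sum.inl c), s(Sum.inl c, Sum.inr 0)},
         {s(Sum.inr 1, Sum.inl a), s(Sum.inl a, Sum.inl c), s(Sum.inl c, Sum.inr 1)},
         {s(Sum.inr 2, Sum.inl a), s(Sum.inl a, Sum.inl b), s(Sum.inl b, Sum.inr 2)},
         {s(Sum.inr 0, Sum.inr 1), s(Sum.inr 1, Sum.inl c), s(Sum.inl c, Sum.inr 0)},
         {s(Sum.inr 1, Sum.inr 2), s(Sum.inr 2, Sum.inl a), s(Sum.inl a, Sum.inr 1)},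
         {s(Sum.inr 0, Sum.inr 2), s(Sum.inr 2, Sum.inl b), s(Sum.inl b, Sum.inr 0)} } :
        Set (Finset (Sym2 (V ⊕ Fin 3)))))
    (harb : Arboreal Gt Ct) :
    (∀ P : SimpleGraph (V ⊕ Fin 3), IsSpanningTree Gt1 P →
      (¬ ∃ s ∈ Ct1, IsFundamentalCycle Gt1 P s) →
      -- the edges of `P` not belonging to `Gt` form a path of length `3`
      -- passing through the three new vertices:
      (∃ (u w : V ⊕ Fin 3) (p : Gt1.Walk u w), p.IsPath ∧ p.length = 3 ∧
        {e | e ∈ p.edges} =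
          P.edgeSet \ ((Sym2.map Sum.inl) '' Gt.edgeSet) ∧
        ∀ i : Fin 3, Sum.inr i ∈ p.support) ∧
      -- deleting the three new vertices yields a spanning tree of `Gt`
      -- none of whose fundamental cycles lies in `Ct`:
      IsSpanningTree Gt (P.comap Sum.inl) ∧
      ¬ ∃ s ∈ Ct, IsFundamentalCycle Gt (P.comap Sum.inl) s) ∧
    Arboreal Gt1 Ct1 :=
  statement9_general Gt Gt1 a b c hadjV hadjNew hadjX hadjY hadjZ Ct Ct1 hCt1 harb
end
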